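/- arXiv:1606.01043 — 6 statements merged into one kernel-verified Lean document; each statement's English description precedes it below -/
import Mathlib

section
/- Let G be a triangle-free graph and let I be drawn from the hard-core model at fugacity λ > 0. For any vertex v and any set S of neighbors of v, conditioned on the event that the uncovered neighbors of v are exactly the vertices of S with |S| = j, the probability that v is uncovered equals (1+λ)^{-j}. -/
open Finset MeasureTheory Real
open scoped Classical

noncomputable def indSets {V : Type*} [Fintype V] (G : SimpleGraph V) : Finset (Finset V) :=
  Finset.univ.filter (fun s => ∀ u ∈ s, ∀ v ∈ s, ¬ G.Adj u v)

/-- The independence polynomial (hard-core partition function). -/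
noncomputable def indPoly {V : Type*} [Fintype V] (G : SimpleGraph V) (x : ℝ) : ℝ :=
  ∑ s ∈ indSets G, x ^ s.card

/-- Expected size of an independent set from the hard-core model at fugacity x. -/
noncomputable def avgSize {V : Type*} [Fintype V] (G : SimpleGraph V) (x : ℝ) : ℝ :=
  x * deriv (indPoly G) x / indPoly G x

/-!
Write an independent set `s` whose uncovered neighbours of `v` are exactly `S` as
`(s \ S) ∪ (s ∩ S)`. As `G` is triangle-free, `N(v)` is independent, so vertices of `N(v)`
cover no neighbour of `v`: adding or removing them does not change which neighbours of `v` are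
uncovered, and any subset of the uncovered set `S` can be added to an independent set.
Occupied neighbours of `v` are uncovered, so `s \ S` leaves `v` uncovered. Thus
`s ↦ (s \ S, s ∩ S)` is a weight-preserving bijection onto pairs (such a set leaving `v`
uncovered, a subset of `S`), and the weight of the event is that of the event with `v`
uncovered times `∑_{A ⊆ S} λ^|A| = (1 + λ)^|S|`.
-/

namespace SimpleGraph

variable {V : Type*} [Fintype V] {G : SimpleGraph V} {v : V}

variable (G) in
noncomputable def uncoveredNbrs (v : V) (s : Finset V) : Finset V :=
  (G.neighborFinset v).filter (fun u => ∀ w, G.Adj u w → w ∉ s)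

lemma mem_indSets {s : Finset V} : s ∈ indSets G ↔ ∀ u ∈ s, ∀ w ∈ s, ¬ G.Adj u w := by
  simp [indSets]

lemma not_adj_of_mem_neighborFinset (htf : G.CliqueFree 3) {a b : V}
    (ha : a ∈ G.neighborFinset v) (hb : b ∈ G.neighborFinset v) : ¬ G.Adj a b := fun hab =>
  isIndepSet_neighborSet_of_triangleFree G htf v
    ((mem_neighborFinset _ _ _).1 ha) ((mem_neighborFinset _ _ _).1 hb) hab.ne hab

lemma uncoveredNbrs_subset (s : Finset V) : G.uncoveredNbrs v s ⊆ G.neighborFinset v :=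
  filter_subset _ _

lemma mem_uncoveredNbrs_of_mem {s : Finset V} {u : V} (hs : s ∈ indSets G)
    (hu : u ∈ G.neighborFinset v) (hus : u ∈ s) : u ∈ G.uncoveredNbrs v s :=
  mem_filter.2 ⟨hu, fun w huw hws => mem_indSets.1 hs u hus w hws huw⟩

lemma uncoveredNbrs_union_of_subset (htf : G.CliqueFree 3) (t : Finset V) {A : Finset V}
    (hA : A ⊆ G.neighborFinset v) : G.uncoveredNbrs v (t ∪ A) = G.uncoveredNbrs v t := by
  refine filter_congr fun u hu => ⟨fun h w huw hwt => h w huw (mem_union_left _ hwt),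
    fun h w huw hw => ?_⟩
  rcases mem_union.1 hw with hwt | hwA
  · exact h w huw hwt
  · exact not_adj_of_mem_neighborFinset htf hu (hA hwA) huw

lemma union_mem_indSets (htf : G.CliqueFree 3) {t A : Finset V} (ht : t ∈ indSets G)
    (hA : A ⊆ G.uncoveredNbrs v t) : t ∪ A ∈ indSets G := by
  have hAt : ∀ a ∈ A, ∀ w ∈ t, ¬ G.Adj a w := fun a ha w hw haw =>
    (mem_filter.1 (hA ha)).2 w haw hw
  refine mem_indSets.2 fun a ha b hb => ?_
  rcases mem_union.1 ha with ha | ha <;> rcases mem_union.1 hb with hb | hb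
  · exact mem_indSets.1 ht a ha b hb
  · exact fun hab => hAt b hb a ha hab.symm
  · exact hAt a ha b hb
  · exact not_adj_of_mem_neighborFinset htf (uncoveredNbrs_subset t (hA ha))
      (uncoveredNbrs_subset t (hA hb))

variable {S : Finset V}

lemma sdiff_mem_filter_uncoveredNbrs (htf : G.CliqueFree 3) (hS : S ⊆ G.neighborFinset v)
    {s : Finset V} (hs : s ∈ (indSets G).filter (fun s => G.uncoveredNbrs v s = S)) :
    s \ S ∈ (indSets G).filter
      (fun s => G.uncoveredNbrs v s = S ∧ ∀ u, G.Adj v u → u ∉ s) := by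
  obtain ⟨hsI, hsS⟩ := mem_filter.1 hs
  refine mem_filter.2 ⟨mem_indSets.2 fun a ha b hb =>
    mem_indSets.1 hsI a (sdiff_subset ha) b (sdiff_subset hb), ?_, ?_⟩
  · rw [← uncoveredNbrs_union_of_subset htf (s \ S) (inter_subset_right.trans hS),
      sdiff_union_inter, hsS]
  · intro u hu hus
    obtain ⟨hus, huS⟩ := mem_sdiff.1 hus
    exact huS (hsS ▸ mem_uncoveredNbrs_of_mem hsI ((mem_neighborFinset _ _ _).2 hu) hus)

lemma union_mem_filter_uncoveredNbrs (htf : G.CliqueFree 3) {t A : Finset V}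
    (ht : t ∈ (indSets G).filter
      (fun s => G.uncoveredNbrs v s = S ∧ ∀ u, G.Adj v u → u ∉ s))
    (hA : A ⊆ S) : t ∪ A ∈ (indSets G).filter (fun s => G.uncoveredNbrs v s = S) := by
  obtain ⟨htI, htS, -⟩ := mem_filter.1 ht
  refine mem_filter.2 ⟨union_mem_indSets htf htI (htS ▸ hA), ?_⟩
  rw [uncoveredNbrs_union_of_subset htf t (hA.trans (htS ▸ uncoveredNbrs_subset t)), htS]

theorem sum_filter_uncoveredNbrs_eq_mul {R : Type*} [CommSemiring R] (htf : G.CliqueFree 3)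
    (hS : S ⊆ G.neighborFinset v) (l : R) :
    ∑ s ∈ (indSets G).filter (fun s => G.uncoveredNbrs v s = S), l ^ s.card =
      (∑ s ∈ (indSets G).filter
        (fun s => G.uncoveredNbrs v s = S ∧ ∀ u, G.Adj v u → u ∉ s), l ^ s.card) *
        (1 + l) ^ S.card := by
  have hdisj : ∀ t ∈ (indSets G).filter
      (fun s => G.uncoveredNbrs v s = S ∧ ∀ u, G.Adj v u → u ∉ s), Disjoint t S :=
    fun t ht => disjoint_right.2 fun a haS =>
      (mem_filter.1 ht).2.2 a ((mem_neighborFinset _ _ _).1 (hS haS))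
  rw [add_comm, ← sum_pow_mul_eq_add_pow, sum_mul_sum, ← sum_product']
  refine sum_nbij' (fun s => (s \ S, s ∩ S)) (fun p => p.1 ∪ p.2) ?_ ?_ ?_ ?_ ?_
  · exact fun s hs => mem_product.2
      ⟨sdiff_mem_filter_uncoveredNbrs htf hS hs, mem_powerset.2 inter_subset_right⟩
  · exact fun p hp => union_mem_filter_uncoveredNbrs htf (mem_product.1 hp).1
      (mem_powerset.1 (mem_product.1 hp).2)
  · exact fun s _ => sdiff_union_inter s S
  · rintro ⟨t, A⟩ hp
    obtain ⟨ht, hA⟩ := mem_product.1 hp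
    simp [union_sdiff_distrib, union_inter_distrib_right,
      sdiff_eq_self_of_disjoint (hdisj t ht), disjoint_iff_inter_eq_empty.1 (hdisj t ht),
      sdiff_eq_empty_iff_subset.2 (mem_powerset.1 hA), inter_eq_left.2 (mem_powerset.1 hA)]
  · intro s _
    rw [one_pow, mul_one, ← pow_add, ← card_union_of_disjoint (disjoint_sdiff_inter s S),
      sdiff_union_inter]

end SimpleGraph

theorem stmt3 {V : Type*} [Fintype V] (G : SimpleGraph V) (htf : G.CliqueFree 3)
    (l : ℝ) (hl : 0 < l) (v : V) (S : Finset V) (j : ℕ)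
    (hS : S ⊆ G.neighborFinset v) (hj : S.card = j)
    (hne : ∃ s ∈ indSets G,
      (G.neighborFinset v).filter (fun u => ∀ w, G.Adj u w → w ∉ s) = S) :
    (∑ s ∈ (indSets G).filter (fun s =>
        ((G.neighborFinset v).filter (fun u => ∀ w, G.Adj u w → w ∉ s) = S) ∧
        ∀ u, G.Adj v u → u ∉ s), l ^ s.card) /
      (∑ s ∈ (indSets G).filter (fun s =>
        (G.neighborFinset v).filter (fun u => ∀ w, G.Adj u w → w ∉ s) = S), l ^ s.card)
      = ((1 + l) ^ j)⁻¹ := by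
  have hfactor := G.sum_filter_uncoveredNbrs_eq_mul htf hS l
  have hpos : 0 < ∑ s ∈ (indSets G).filter
      (fun s => G.uncoveredNbrs v s = S ∧ ∀ u, G.Adj v u → u ∉ s), l ^ s.card := by
    obtain ⟨s, hsI, hsS⟩ := hne
    have hsS' := G.sdiff_mem_filter_uncoveredNbrs htf hS (mem_filter.2 ⟨hsI, hsS⟩)
    exact sum_pos' (fun t _ => (pow_pos hl _).le) ⟨s \ S, hsS', pow_pos hl _⟩
  unfold SimpleGraph.uncoveredNbrs at hfactor hpos
  rw [hfactor, ← hj, div_mul_cancel_left₀ hpos.ne']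
end

section
/- Let Z be a real-valued random variable with 0 ≤ Z ≤ d (d > 0), and let λ > 0. Then max{ E[Z]/d, E[(1+λ)^{-Z}] } ≥ W(d·log(1+λ)) / (d·log(1+λ)), where W is the Lambert W function. -/
/-!
Since `x ↦ (1 + λ) ^ x` is convex, Jensen gives `E[(1 + λ) ^ (-Z)] ≥ (1 + λ) ^ (-E[Z])`, so it
suffices to bound `max (x / d) ((1 + λ) ^ (-x))` from below uniformly in `x`. The first term
increases and the second decreases in `x`; they cross where `x · log (1 + λ) = W (d · log (1 + λ))`,
and the Lambert equation `W e^W = d · log (1 + λ)` makes the common value `e^(-W)`.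
-/

open MeasureTheory

lemma div_eq_exp_neg_of_mul_exp_eq {w a : ℝ} (ha : 0 < a) (hwe : w * Real.exp w = a) :
    w / a = Real.exp (-w) := by
  have hw : w ≠ 0 := by
    rintro rfl
    exact ha.ne (by rwa [zero_mul] at hwe)
  rw [← hwe, Real.exp_neg]
  field_simp

lemma lambert_div_le_max_div_rpow_neg {b d w : ℝ} (hb : 1 < b) (hd : 0 < d)
    (hwe : w * Real.exp w = d * Real.log b) (x : ℝ) :
    w / (d * Real.log b) ≤ max (x / d) (b ^ (-x)) := by
  have hc : 0 < Real.log b := Real.log_pos hb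
  rcases le_or_gt (w / Real.log b) x with hx | hx
  · refine le_max_of_le_left ?_
    rw [mul_comm, ← div_div]
    gcongr
  · refine le_max_of_le_right ?_
    rw [div_eq_exp_neg_of_mul_exp_eq (by positivity) hwe, Real.rpow_def_of_pos (by linarith)]
    gcongr
    linarith [(lt_div_iff₀ hc).mp hx]

lemma rpow_integral_le_integral_rpow {α : Type*} [MeasurableSpace α] {μ : Measure α}
    [IsProbabilityMeasure μ] {b : ℝ} (hb : 0 < b) {X : α → ℝ} (hX : Integrable X μ)
    (hbX : Integrable (fun x ↦ b ^ X x) μ) :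
    b ^ (∫ x, X x ∂μ) ≤ ∫ x, b ^ X x ∂μ :=
  (convexOn_rpow_left hb).map_integral_le (Real.continuous_const_rpow hb.ne').continuousOn
    isClosed_univ (ae_of_all _ fun _ ↦ Set.mem_univ _) hX hbX

theorem stmt6_general {Ω : Type*} [MeasureSpace Ω] [IsProbabilityMeasure (volume : Measure Ω)]
    (Z : Ω → ℝ) (hZm : Measurable Z) (d : ℝ) (hd : 0 < d)
    (hZ : ∀ ω, 0 ≤ Z ω ∧ Z ω ≤ d) (l w : ℝ) (hl : 0 < l)
    (hWe : w * Real.exp w = d * Real.log (1 + l)) :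
    w / (d * Real.log (1 + l))
      ≤ max ((∫ ω, Z ω) / d) (∫ ω, (1 + l) ^ (-(Z ω))) := by
  have hb : 1 < 1 + l := by linarith
  have hZi : Integrable Z := Integrable.of_mem_Icc 0 d hZm.aemeasurable (ae_of_all _ hZ)
  have hpowi : Integrable (fun ω ↦ (1 + l) ^ (-(Z ω))) := by
    refine Integrable.of_mem_Icc 0 1 (by fun_prop) (ae_of_all _ fun ω ↦ ⟨by positivity, ?_⟩)
    exact Real.rpow_le_one_of_one_le_of_nonpos hb.le (by linarith [(hZ ω).1])
  have hJensen : (1 + l) ^ (-∫ ω, Z ω) ≤ ∫ ω, (1 + l) ^ (-(Z ω)) := by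
    simpa only [integral_neg] using rpow_integral_le_integral_rpow (X := fun ω ↦ -Z ω) (by linarith) hZi.neg hpowi
  exact (lambert_div_le_max_div_rpow_neg hb hd hWe _).trans (max_le_max le_rfl hJensen)

theorem stmt6 {Ω : Type*} [MeasureSpace Ω] [IsProbabilityMeasure (volume : Measure Ω)]
    (Z : Ω → ℝ) (hZm : Measurable Z) (d : ℝ) (hd : 0 < d)
    (hZ : ∀ ω, 0 ≤ Z ω ∧ Z ω ≤ d) (l w : ℝ) (hl : 0 < l) (hw : 0 < w)
    (hWe : w * Real.exp w = d * Real.log (1 + l)) :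
    w / (d * Real.log (1 + l))
      ≤ max ((∫ ω, Z ω) / d) (∫ ω, (1 + l) ^ (-(Z ω))) :=
  stmt6_general Z hZm d hd hZ l w hl hWe
end

section
/- Let G be a d-regular triangle-free graph on n vertices and λ > 0. Then the occupancy fraction satisfies (1/n)·ᾱ_G(λ) ≤ λ(1+λ)^{d-1} / (2(1+λ)^d − 1). -/
open Finset MeasureTheory Real
open scoped Classical

/-!
Fix a vertex `v` and condition the hard-core model on the independent set `J` it induces outside
the closed neighbourhood `N[v]`. In a triangle-free graph every subset of `N(v)` is independent, so
if `u` neighbours of `v` have no neighbour in `J`, the conditional partition function is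
`λ + (1 + λ) ^ u`, of which `λ` comes from `v ∈ I`, while the occupied neighbours contribute
`u λ (1 + λ) ^ (u - 1)`. Averaged over `v`, the first quantity gives the occupancy fraction and the
second `d` times it. A fixed linear combination of the two, with coefficients chosen so that
`K_{d,d}` is extremal, is bounded for every `0 ≤ u ≤ d` by the convexity of `u ↦ (1 + λ) ^ u`
(weighted AM-GM), and summing over `v` gives the bound.
-/

lemma add_mul_pow_le {b : ℝ} (hb : 0 ≤ b) (k u : ℕ) :
    ((k : ℝ) + u) * b ^ k ≤ k * b ^ (k + u) + u := by
  rcases (k + u).eq_zero_or_pos with h | h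
  · obtain ⟨rfl, rfl⟩ : k = 0 ∧ u = 0 := by omega
    simp
  have hn : (0 : ℝ) < k + u := by exact_mod_cast h
  have amgm := Real.geom_mean_le_arith_mean2_weighted (p₁ := b ^ (k + u)) (p₂ := 1)
    (div_nonneg k.cast_nonneg hn.le) (div_nonneg u.cast_nonneg hn.le) (by positivity) zero_le_one
    (by rw [← add_div, div_self hn.ne'])
  have hpow : (b ^ (k + u)) ^ ((k : ℝ) / (k + u)) = b ^ k := by
    rw [← Real.rpow_natCast, ← Real.rpow_mul hb, Nat.cast_add, mul_div_cancel₀ _ hn.ne',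
      Real.rpow_natCast]
  rw [Real.one_rpow, mul_one, hpow] at amgm
  calc ((k : ℝ) + u) * b ^ k ≤ (k + u) * (k / (k + u) * b ^ (k + u) + u / (k + u) * 1) :=
        mul_le_mul_of_nonneg_left amgm hn.le
    _ = k * b ^ (k + u) + u := by field_simp

/-- The dual constraint for a vertex with `u` uncovered neighbours, multiplied out: the three
terms are the conditional weights of `v ∈ I`, of the occupied neighbours (times `1 + l`) and of
all local configurations. -/
lemma occupancy_local_ineq {l : ℝ} (hl : 0 ≤ l) {d u : ℕ} (hu : u ≤ d) :
    (1 + l) * (d * (1 + l) ^ d * l) + ((1 + l) ^ d - 1) * (u * l * (1 + l) ^ u)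
      ≤ d * l * (1 + l) ^ d * (l + (1 + l) ^ u) := by
  obtain ⟨k, rfl⟩ := Nat.exists_eq_add_of_le' hu
  have h := mul_le_mul_of_nonneg_left (add_mul_pow_le (by linarith : 0 ≤ 1 + l) k u)
    (by positivity : 0 ≤ l * (1 + l) ^ u)
  push_cast
  rw [pow_add] at h ⊢
  linear_combination h

lemma sum_powerset_pow_card {R ι : Type*} [CommSemiring R] (l : R) (U : Finset ι) :
    ∑ T ∈ U.powerset, l ^ #T = (1 + l) ^ #U := by
  simpa [add_comm] using sum_pow_mul_eq_add_pow l 1 U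

lemma one_add_mul_sum_powerset_card_mul_pow_card {R ι : Type*} [CommRing R] (l : R)
    (U : Finset ι) :
    (1 + l) * ∑ T ∈ U.powerset, (#T : R) * l ^ #T = #U * l * (1 + l) ^ #U := by
  induction U using Finset.induction_on with
  | empty => simp
  | insert a U ha ih =>
    have hinsert : ∑ T ∈ U.powerset, (#(insert a T) : R) * l ^ #(insert a T)
        = l * ∑ T ∈ U.powerset, (#T : R) * l ^ #T + l * ∑ T ∈ U.powerset, l ^ #T := by
      rw [mul_sum, mul_sum, ← sum_add_distrib]
      refine sum_congr rfl fun T hT => ?_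
      rw [card_insert_of_notMem fun h => ha (mem_powerset.1 hT h)]
      push_cast
      ring
    rw [sum_powerset_insert ha, hinsert, sum_powerset_pow_card, card_insert_of_notMem ha]
    push_cast
    linear_combination (1 + l) * ih

section IndependentSets

variable {V : Type*} [Fintype V] {G : SimpleGraph V}

lemma mem_indSets {s : Finset V} : s ∈ indSets G ↔ ∀ u ∈ s, ∀ v ∈ s, ¬ G.Adj u v := by
  simp [indSets]

lemma mem_indSets_of_subset {s t : Finset V} (hts : t ⊆ s) (hs : s ∈ indSets G) :
    t ∈ indSets G :=
  mem_indSets.2 fun a ha b hb => mem_indSets.1 hs a (hts ha) b (hts hb)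

lemma union_mem_indSets_iff {s t : Finset V} :
    s ∪ t ∈ indSets G ↔ s ∈ indSets G ∧ t ∈ indSets G ∧ ∀ a ∈ s, ∀ b ∈ t, ¬ G.Adj a b := by
  simp only [mem_indSets, mem_union]
  constructor
  · intro h
    exact ⟨fun a ha b hb => h a (.inl ha) b (.inl hb), fun a ha b hb => h a (.inr ha) b (.inr hb),
      fun a ha b hb => h a (.inl ha) b (.inr hb)⟩
  · rintro ⟨hs, ht, hst⟩ a (ha | ha) b (hb | hb)
    exacts [hs a ha b hb, hst a ha b hb, fun hab => hst b hb a ha hab.symm, ht a ha b hb]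

lemma mem_indSets_of_subset_neighborFinset (htf : G.CliqueFree 3) {v : V} {t : Finset V}
    (ht : t ⊆ G.neighborFinset v) : t ∈ indSets G :=
  mem_indSets.2 fun a ha b hb hab => htf {v, a, b} <| SimpleGraph.is3Clique_triple_iff.2
    ⟨(G.mem_neighborFinset _ _).1 (ht ha), (G.mem_neighborFinset _ _).1 (ht hb), hab⟩

variable (G)

lemma indPoly_pos {x : ℝ} (hx : 0 ≤ x) : 0 < indPoly G x :=
  calc (0 : ℝ) < x ^ #(∅ : Finset V) := by simp
    _ ≤ indPoly G x := single_le_sum (fun I _ => pow_nonneg hx _) (mem_indSets.2 (by simp))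

lemma avgSize_eq (x : ℝ) :
    avgSize G x = (∑ I ∈ indSets G, (#I : ℝ) * x ^ #I) / indPoly G x := by
  have hderiv : HasDerivAt (indPoly G) (∑ I ∈ indSets G, (#I : ℝ) * x ^ (#I - 1)) x :=
    HasDerivAt.fun_sum fun I _ => hasDerivAt_pow #I x
  rw [avgSize, hderiv.deriv, mul_sum]
  congr 1
  refine sum_congr rfl fun I _ => ?_
  rcases (#I).eq_zero_or_pos with h | h
  · simp [h]
  · rw [mul_left_comm, mul_pow_sub_one h.ne']

end IndependentSets

namespace SimpleGraph

variable {V : Type*} [Fintype V] (G : SimpleGraph V)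

lemma sum_card_inter_neighborFinset (s : Finset V) :
    ∑ v, #(s ∩ G.neighborFinset v) = ∑ u ∈ s, G.degree u := by
  convert sum_card_bipartiteAbove_eq_sum_card_bipartiteBelow (s := univ) (t := s) (r := G.Adj)
    using 3 with v _ u _
  · ext; simp [bipartiteAbove]
  · rw [← card_neighborFinset_eq_degree]
    congr 1
    ext
    simp [bipartiteBelow, G.adj_comm]

variable (v : V)

noncomputable def closedNeighborFinset : Finset V := insert v (G.neighborFinset v)

noncomputable def outerIndSets : Finset (Finset V) :=
  (indSets G).filter (Disjoint · (G.closedNeighborFinset v))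

noncomputable def freeNeighbors (J : Finset V) : Finset V :=
  (G.neighborFinset v).filter (fun u => ∀ w ∈ J, ¬ G.Adj u w)

variable {G v}

lemma notMem_and_disjoint_neighborFinset_of_mem_outerIndSets {J : Finset V}
    (hJ : J ∈ G.outerIndSets v) : v ∉ J ∧ Disjoint J (G.neighborFinset v) :=
  disjoint_insert_right.1 (mem_filter.1 hJ).2

lemma freeNeighbors_subset (J : Finset V) : G.freeNeighbors v J ⊆ G.neighborFinset v :=
  filter_subset _ _

lemma union_mem_indSets_of_mem_outerIndSets (htf : G.CliqueFree 3) {J T : Finset V}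
    (hJ : J ∈ G.outerIndSets v) (hT : T ∈ insert {v} (G.freeNeighbors v J).powerset) :
    J ∪ T ∈ indSets G := by
  obtain ⟨-, hJN⟩ := notMem_and_disjoint_neighborFinset_of_mem_outerIndSets hJ
  refine union_mem_indSets_iff.2 ⟨(mem_filter.1 hJ).1, ?_⟩
  rcases mem_insert.1 hT with rfl | hT
  · refine ⟨mem_indSets.2 (by simp), fun a ha b hb hab => ?_⟩
    rw [mem_singleton.1 hb] at hab
    exact Finset.disjoint_left.1 hJN ha ((G.mem_neighborFinset _ _).2 hab.symm)
  · have hT := mem_powerset.1 hT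
    exact ⟨mem_indSets_of_subset_neighborFinset htf (hT.trans (freeNeighbors_subset J)),
      fun a ha b hb hab => (mem_filter.1 (hT hb)).2 a ha hab.symm⟩

lemma inter_closedNeighborFinset_mem {I : Finset V} (hI : I ∈ indSets G) :
    I ∩ G.closedNeighborFinset v
      ∈ insert {v} (G.freeNeighbors v (I \ G.closedNeighborFinset v)).powerset := by
  have hI := mem_indSets.1 hI
  by_cases hv : v ∈ I
  · refine mem_insert.2 (.inl ?_)
    ext x
    simp only [closedNeighborFinset, mem_inter, mem_insert, mem_neighborFinset, mem_singleton]
    exact ⟨fun ⟨hx, h⟩ => h.resolve_right (hI v hv x hx), fun h => ⟨h ▸ hv, .inl h⟩⟩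
  · refine mem_insert_of_mem (mem_powerset.2 fun x hx => ?_)
    obtain ⟨hxI, hxN⟩ := mem_inter.1 hx
    have hxv : x ≠ v := fun h => hv (h ▸ hxI)
    simp only [closedNeighborFinset, mem_insert, hxv, false_or] at hxN
    exact mem_filter.2 ⟨hxN, fun w hw => hI x hxI w (mem_sdiff.1 hw).1⟩

/-- `I ↦ (I \ N[v], I ∩ N[v])`; by triangle-freeness the local part is either `{v}` or an
arbitrary set of free neighbours. -/
lemma sum_indSets_eq_sum_outerIndSets (htf : G.CliqueFree 3) (f : Finset V → ℝ) :
    ∑ I ∈ indSets G, f I = ∑ J ∈ G.outerIndSets v,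
      (f (insert v J) + ∑ T ∈ (G.freeNeighbors v J).powerset, f (J ∪ T)) := by
  set N := G.closedNeighborFinset v
  have hlocal : ∀ J, f (insert v J) + ∑ T ∈ (G.freeNeighbors v J).powerset, f (J ∪ T)
      = ∑ T ∈ insert {v} (G.freeNeighbors v J).powerset, f (J ∪ T) := fun J => by
    have hv : {v} ∉ (G.freeNeighbors v J).powerset := fun h => G.notMem_neighborFinset_self v
      (freeNeighbors_subset J (mem_powerset.1 h (mem_singleton_self v)))
    rw [sum_insert hv, union_comm, ← insert_eq]
  rw [sum_congr rfl fun J _ => hlocal J, sum_sigma']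
  refine (sum_nbij' (fun p : (_ : Finset V) × Finset V => p.1 ∪ p.2)
    (fun I => ⟨I \ N, I ∩ N⟩) ?_ ?_ ?_ (fun I _ => sdiff_union_inter I N) fun _ _ => rfl).symm
  · rintro ⟨J, T⟩ hJT
    exact union_mem_indSets_of_mem_outerIndSets htf (mem_sigma.1 hJT).1 (mem_sigma.1 hJT).2
  · intro I hI
    exact mem_sigma.2 ⟨mem_filter.2 ⟨mem_indSets_of_subset sdiff_subset hI, sdiff_disjoint⟩,
      inter_closedNeighborFinset_mem hI⟩
  · rintro ⟨J, T⟩ hJT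
    obtain ⟨hJ, hT⟩ := mem_sigma.1 hJT
    have hJN : Disjoint J N := (mem_filter.1 hJ).2
    have hTN : T ⊆ N := by
      rcases mem_insert.1 hT with rfl | hT
      · simp [N, closedNeighborFinset]
      · exact ((mem_powerset.1 hT).trans (freeNeighbors_subset J)).trans (subset_insert _ _)
    simp only [union_sdiff_distrib, sdiff_eq_self_of_disjoint hJN, sdiff_eq_empty_iff_subset.2 hTN,
      union_empty, union_inter_distrib_right, disjoint_iff_inter_eq_empty.1 hJN,
      inter_eq_left.2 hTN, empty_union]

lemma indPoly_eq_sum_outerIndSets (htf : G.CliqueFree 3) (l : ℝ) :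
    indPoly G l = ∑ J ∈ G.outerIndSets v, l ^ #J * (l + (1 + l) ^ #(G.freeNeighbors v J)) := by
  rw [indPoly, sum_indSets_eq_sum_outerIndSets htf]
  refine sum_congr rfl fun J hJ => ?_
  obtain ⟨hvJ, hJN⟩ := notMem_and_disjoint_neighborFinset_of_mem_outerIndSets hJ
  have hunion : ∀ T ∈ (G.freeNeighbors v J).powerset, l ^ #(J ∪ T) = l ^ #J * l ^ #T :=
    fun T hT => by
      rw [card_union_of_disjoint (hJN.mono_right ((mem_powerset.1 hT).trans
        (freeNeighbors_subset J))), pow_add]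
  rw [sum_congr rfl hunion, ← mul_sum, sum_powerset_pow_card, card_insert_of_notMem hvJ, pow_succ,
    mul_add]

lemma sum_ite_mem_eq_sum_outerIndSets (htf : G.CliqueFree 3) (l : ℝ) :
    ∑ I ∈ indSets G, (if v ∈ I then l ^ #I else 0) = ∑ J ∈ G.outerIndSets v, l ^ #J * l := by
  rw [sum_indSets_eq_sum_outerIndSets htf]
  refine sum_congr rfl fun J hJ => ?_
  obtain ⟨hvJ, -⟩ := notMem_and_disjoint_neighborFinset_of_mem_outerIndSets hJ
  have hunion : ∀ T ∈ (G.freeNeighbors v J).powerset, v ∉ J ∪ T := fun T hT h =>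
    (mem_union.1 h).elim hvJ fun hvT =>
      G.notMem_neighborFinset_self v ((mem_powerset.1 hT).trans (freeNeighbors_subset J) hvT)
  rw [if_pos (mem_insert_self v J), sum_eq_zero fun T hT => if_neg (hunion T hT),
    card_insert_of_notMem hvJ, pow_succ, add_zero]

lemma one_add_mul_sum_card_inter_eq_sum_outerIndSets (htf : G.CliqueFree 3) (l : ℝ) :
    (1 + l) * ∑ I ∈ indSets G, (#(I ∩ G.neighborFinset v) : ℝ) * l ^ #I
      = ∑ J ∈ G.outerIndSets v,
          l ^ #J * (#(G.freeNeighbors v J) * l * (1 + l) ^ #(G.freeNeighbors v J)) := by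
  rw [sum_indSets_eq_sum_outerIndSets htf, mul_sum]
  refine sum_congr rfl fun J hJ => ?_
  obtain ⟨hvJ, hJN⟩ := notMem_and_disjoint_neighborFinset_of_mem_outerIndSets hJ
  have hinsert : insert v J ∩ G.neighborFinset v = ∅ := by
    rw [insert_inter_of_notMem (G.notMem_neighborFinset_self v), disjoint_iff_inter_eq_empty.1 hJN]
  have hunion : ∀ T ∈ (G.freeNeighbors v J).powerset,
      (#((J ∪ T) ∩ G.neighborFinset v) : ℝ) * l ^ #(J ∪ T) = l ^ #J * (#T * l ^ #T) :=
    fun T hT => by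
      have hTN := (mem_powerset.1 hT).trans (freeNeighbors_subset J)
      rw [union_inter_distrib_right, disjoint_iff_inter_eq_empty.1 hJN, empty_union,
        inter_eq_left.2 hTN, card_union_of_disjoint (hJN.mono_right hTN), pow_add]
      ring
  rw [hinsert, card_empty, Nat.cast_zero, zero_mul, zero_add, sum_congr rfl hunion, ← mul_sum,
    mul_left_comm, one_add_mul_sum_powerset_card_mul_pow_card]

lemma occupancy_vertex_ineq (htf : G.CliqueFree 3) {d : ℕ} (hv : G.degree v ≤ d) {l : ℝ}
    (hl : 0 ≤ l) :
    (1 + l) * (d * (1 + l) ^ d * ∑ I ∈ indSets G, (if v ∈ I then l ^ #I else 0)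
      + ((1 + l) ^ d - 1) * ∑ I ∈ indSets G, (#(I ∩ G.neighborFinset v) : ℝ) * l ^ #I)
      ≤ d * l * (1 + l) ^ d * indPoly G l := by
  rw [show ∀ a b X Y : ℝ, (1 + l) * (a * X + b * Y) = (1 + l) * a * X + b * ((1 + l) * Y) from
      fun _ _ _ _ => by ring, one_add_mul_sum_card_inter_eq_sum_outerIndSets htf,
    sum_ite_mem_eq_sum_outerIndSets htf, indPoly_eq_sum_outerIndSets htf, mul_sum, mul_sum, mul_sum,
    ← sum_add_distrib]
  refine sum_le_sum fun J _ => ?_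
  have hfree : #(G.freeNeighbors v J) ≤ d :=
    (card_le_card (freeNeighbors_subset J)).trans ((card_neighborFinset_eq_degree G v).trans_le hv)
  linear_combination mul_le_mul_of_nonneg_left (occupancy_local_ineq hl hfree) (pow_nonneg hl #J)

variable (G) in
lemma two_mul_pow_sub_one_mul_sum_le (htf : G.CliqueFree 3) {d : ℕ} (hd : 0 < d)
    (hreg : ∀ v, G.degree v = d) {l : ℝ} (hl : 0 ≤ l) :
    (2 * (1 + l) ^ d - 1) * ∑ I ∈ indSets G, (#I : ℝ) * l ^ #I
      ≤ Fintype.card V * (l * (1 + l) ^ (d - 1)) * indPoly G l := by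
  set A := ∑ I ∈ indSets G, (#I : ℝ) * l ^ #I
  have hX : ∑ v, ∑ I ∈ indSets G, (if v ∈ I then l ^ #I else 0) = A := by
    rw [sum_comm]
    simp [A]
  have hY : ∑ v, ∑ I ∈ indSets G, (#(I ∩ G.neighborFinset v) : ℝ) * l ^ #I = d * A := by
    rw [sum_comm, mul_sum]
    refine sum_congr rfl fun I _ => ?_
    rw [← sum_mul, ← Nat.cast_sum, sum_card_inter_neighborFinset, sum_const_nat fun u _ => hreg u]
    push_cast
    ring
  have hsum := sum_le_sum fun v (_ : v ∈ univ) => occupancy_vertex_ineq (v := v) htf (hreg v).le hl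
  rw [← mul_sum, sum_add_distrib, ← mul_sum, ← mul_sum, hX, hY, sum_const, card_univ,
    nsmul_eq_mul] at hsum
  refine le_of_mul_le_mul_left ?_ (by positivity : (0 : ℝ) < d * (1 + l))
  calc d * (1 + l) * ((2 * (1 + l) ^ d - 1) * A)
      = (1 + l) * (d * (1 + l) ^ d * A + ((1 + l) ^ d - 1) * (d * A)) := by ring
    _ ≤ Fintype.card V * (d * l * (1 + l) ^ d * indPoly G l) := hsum
    _ = d * (1 + l) * (Fintype.card V * (l * (1 + l) ^ (d - 1)) * indPoly G l) := by
      rw [← pow_sub_one_mul hd.ne' (1 + l)]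
      ring

end SimpleGraph

theorem stmt8_general {V : Type*} [Fintype V] (G : SimpleGraph V) (d : ℕ)
    (hd : 1 ≤ d) (htf : G.CliqueFree 3) (hreg : ∀ v, G.degree v = d)
    (l : ℝ) (hl : 0 < l) :
    avgSize G l / (Fintype.card V : ℝ)
      ≤ l * (1 + l) ^ (d - 1) / (2 * (1 + l) ^ d - 1) := by
  have hden : 0 < 2 * (1 + l) ^ d - 1 := by
    linarith [one_le_pow₀ (by linarith : (1 : ℝ) ≤ 1 + l) (n := d)]
  refine div_le_of_le_mul₀ (Nat.cast_nonneg _) (div_nonneg (by positivity) hden.le) ?_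
  rw [avgSize_eq, div_le_iff₀ (indPoly_pos G hl.le), div_mul_eq_mul_div, div_mul_eq_mul_div,
    le_div_iff₀ hden]
  linarith [G.two_mul_pow_sub_one_mul_sum_le htf hd hreg hl.le]

theorem stmt8 {V : Type*} [Fintype V] [Nonempty V] (G : SimpleGraph V) (d : ℕ)
    (hd : 1 ≤ d) (htf : G.CliqueFree 3) (hreg : ∀ v, G.degree v = d)
    (l : ℝ) (hl : 0 < l) :
    avgSize G l / (Fintype.card V : ℝ)
      ≤ l * (1 + l) ^ (d - 1) / (2 * (1 + l) ^ d - 1) :=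
  stmt8_general G d hd htf hreg l hl
end

section
/- For any random variable Z with 0 ≤ Z ≤ d and λ > 0, (1+λ)^{-Z} ≤ (Z/d)·(1+λ)^{-d} + 1 − Z/d pointwise; consequently, if E[Z]/d = E[(1+λ)^{-Z}] = c·(1+λ)/λ for some c, then c ≤ λ(1+λ)^{d-1}/(2(1+λ)^d − 1). -/
/-! Since `x ↦ b ^ (-x)` is convex, on `[0, d]` it lies below its chord through `(0, 1)` and
`(d, b ^ (-d))`. Taking expectations with `m = E[Z] / d` gives `E[b ^ (-Z)] ≤ m b ^ (-d) + 1 - m`;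
when `E[b ^ (-Z)] = m` this says `m ≤ b ^ d / (2 b ^ d - 1)`, and with `b = 1 + λ` the bound on
`c = m λ / (1 + λ)` follows. -/

open MeasureTheory

theorem Real.rpow_neg_le_chord {b d x : ℝ} (hb : 0 < b) (hd : 0 < d) (hx₀ : 0 ≤ x)
    (hxd : x ≤ d) : b ^ (-x) ≤ x / d * b ^ (-d) + 1 - x / d := by
  have ht₁ : 0 ≤ 1 - x / d := by rw [sub_nonneg, div_le_one hd]; exact hxd
  have hchord := (convexOn_rpow_left hb).2 (Set.mem_univ 0) (Set.mem_univ (-d)) ht₁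
    (div_nonneg hx₀ hd.le) (sub_add_cancel 1 (x / d))
  have hx : (1 - x / d) * 0 + x / d * -d = -x := by field_simp; ring
  simp only [smul_eq_mul, hx, Real.rpow_zero] at hchord
  linarith

theorem integral_rpow_neg_le_chord {Ω : Type*} [MeasurableSpace Ω] {μ : Measure Ω}
    [IsProbabilityMeasure μ] {Z : Ω → ℝ} (hZm : Measurable Z) {b d : ℝ} (hb : 0 < b)
    (hd : 0 < d) (hZ : ∀ ω, 0 ≤ Z ω ∧ Z ω ≤ d) :
    ∫ ω, b ^ (-Z ω) ∂μ ≤ (∫ ω, Z ω ∂μ) / d * b ^ (-d) + 1 - (∫ ω, Z ω ∂μ) / d := by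
  have hZi : Integrable Z μ := Integrable.of_bound hZm.aestronglyMeasurable d
    (ae_of_all _ fun ω ↦ by rw [Real.norm_of_nonneg (hZ ω).1]; exact (hZ ω).2)
  have hchord_int : Integrable (fun ω ↦ Z ω / d * b ^ (-d) + 1 - Z ω / d) μ :=
    (((hZi.div_const d).mul_const _).add (integrable_const 1)).sub (hZi.div_const d)
  calc ∫ ω, b ^ (-Z ω) ∂μ ≤ ∫ ω, (Z ω / d * b ^ (-d) + 1 - Z ω / d) ∂μ :=
        integral_mono_of_nonneg (ae_of_all _ fun ω ↦ (Real.rpow_pos_of_pos hb _).le) hchord_int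
          (ae_of_all _ fun ω ↦ Real.rpow_neg_le_chord hb hd (hZ ω).1 (hZ ω).2)
    _ = (∫ ω, Z ω ∂μ) / d * b ^ (-d) + 1 - (∫ ω, Z ω ∂μ) / d := by
        rw [integral_sub (f := fun ω ↦ Z ω / d * b ^ (-d) + 1)
          (((hZi.div_const d).mul_const _).add (integrable_const 1)) (hZi.div_const d),
          integral_add ((hZi.div_const d).mul_const _) (integrable_const 1),
          integral_mul_const, integral_div, integral_const]
        simp

theorem mul_div_one_add_le_of_le_chord {m d l : ℝ} (hd : 0 < d) (hl : 0 < l)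
    (hm : m ≤ m * (1 + l) ^ (-d) + 1 - m) :
    m * l / (1 + l) ≤ l * (1 + l) ^ (d - 1) / (2 * (1 + l) ^ d - 1) := by
  have h1l : 0 < 1 + l := by linarith
  have hD : 1 < (1 + l) ^ d := Real.one_lt_rpow (by linarith) hd
  rw [Real.rpow_neg h1l.le] at hm
  rw [Real.rpow_sub h1l, Real.rpow_one, mul_div_assoc', div_div, div_le_div_iff₀
    (by positivity) (mul_pos h1l (by linarith))]
  have hmD : m * (2 * (1 + l) ^ d - 1) ≤ (1 + l) ^ d := by
    have := mul_le_mul_of_nonneg_right hm (by linarith : (0 : ℝ) ≤ (1 + l) ^ d)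
    rw [sub_mul, add_mul, mul_assoc, inv_mul_cancel₀ (by linarith)] at this
    linarith
  nlinarith [mul_le_mul_of_nonneg_left hmD (mul_pos hl h1l).le]

theorem stmt10 {Ω : Type*} [MeasureSpace Ω] [IsProbabilityMeasure (volume : Measure Ω)]
    (Z : Ω → ℝ) (hZm : Measurable Z) (d l : ℝ) (hd : 0 < d) (hl : 0 < l)
    (hZ : ∀ ω, 0 ≤ Z ω ∧ Z ω ≤ d) :
    (∀ ω, (1 + l) ^ (-(Z ω)) ≤ (Z ω / d) * (1 + l) ^ (-d) + 1 - Z ω / d) ∧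
      ∀ c : ℝ, (∫ ω, Z ω) / d = ∫ ω, (1 + l) ^ (-(Z ω)) →
        (∫ ω, Z ω) / d = c * (1 + l) / l →
        c ≤ l * (1 + l) ^ (d - 1) / (2 * (1 + l) ^ d - 1) := by
  have h1l : 0 < 1 + l := by linarith
  refine ⟨fun ω ↦ Real.rpow_neg_le_chord h1l hd (hZ ω).1 (hZ ω).2, fun c hfix hc ↦ ?_⟩
  have hchord := integral_rpow_neg_le_chord (μ := volume) hZm h1l hd hZ
  rw [← hfix] at hchord
  have hc' : c = (∫ ω, Z ω) / d * l / (1 + l) := by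
    rw [hc]; field_simp
  rw [hc']
  exact mul_div_one_add_le_of_le_chord hd hl hchord
end

section
/- Let G be a graph on n vertices with independence number α ≥ 1, and let i_k denote the number of independent sets of size k in G. Then for every 1 ≤ k ≤ α, k·i_k ≤ n·(1 − (k−1)/α)·i_{k−1}. -/
open Finset MeasureTheory Real
open scoped Classical

/-- Number of independent sets of size k. -/
noncomputable def numIs {V : Type*} [Fintype V] (G : SimpleGraph V) (k : ℕ) : ℕ :=
  ((indSets G).filter (fun s => s.card = k)).card

/-! Let `e(T)` be the number of vertices extending an independent `k`-set `T`. Double counting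
gives `∑ e(T) = (k+1) i_{k+1}`, and `∑ e(T)² = ∑_{S, u ∈ S} e(S - u)` over independent
`(k+1)`-sets `S`. A vertex outside `S` with a neighbour in `S` can replace at most one vertex of
`S`, so `∑_{u ∈ S} e(S - u) ≤ n + k e(S)` and `∑ e(T)² ≤ n i_{k+1} + k(k+2) i_{k+2}`.
Cauchy–Schwarz turns this into the Moon–Moser inequality, from which the bound follows by
downward induction on `k`, starting at `i_{α+1} = 0`. -/

section IndependentSets

variable {V : Type*} [Fintype V] {G : SimpleGraph V}

variable (G) in
noncomputable def indSetsOfCard (k : ℕ) : Finset (Finset V) :=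
  (indSets G).filter (fun s => s.card = k)

lemma mem_indSetsOfCard {k : ℕ} {s : Finset V} :
    s ∈ indSetsOfCard G k ↔ s ∈ indSets G ∧ s.card = k :=
  Finset.mem_filter

lemma numIs_eq_card_indSetsOfCard (k : ℕ) : numIs G k = #(indSetsOfCard G k) := rfl

lemma numIs_eq_zero_of_sup_lt {k : ℕ} (hk : (indSets G).sup Finset.card < k) :
    numIs G k = 0 := by
  rw [numIs_eq_card_indSetsOfCard, Finset.card_eq_zero, Finset.eq_empty_iff_forall_notMem]
  rintro s hs
  obtain ⟨hind, rfl⟩ := mem_indSetsOfCard.1 hs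
  exact (Finset.le_sup (f := Finset.card) hind).not_gt hk

variable (G) in
noncomputable def extensions (T : Finset V) : Finset V :=
  univ.filter (fun v => v ∉ T ∧ insert v T ∈ indSets G)

lemma mem_extensions {T : Finset V} {v : V} :
    v ∈ extensions G T ↔ v ∉ T ∧ insert v T ∈ indSets G := by
  simp [extensions]

lemma sum_sum_extensions {M : Type*} [AddCommMonoid M] (k : ℕ) (g : Finset V → V → M) :
    ∑ T ∈ indSetsOfCard G k, ∑ v ∈ extensions G T, g T v
      = ∑ S ∈ indSetsOfCard G (k + 1), ∑ v ∈ S, g (S.erase v) v := by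
  rw [Finset.sum_sigma', Finset.sum_sigma']
  refine Finset.sum_bij' (fun p _ => ⟨insert p.2 p.1, p.2⟩)
    (fun p _ => ⟨p.1.erase p.2, p.2⟩) ?_ ?_ ?_ ?_ ?_
  · rintro ⟨T, v⟩ h
    simp only [Finset.mem_sigma, mem_indSetsOfCard, mem_extensions] at h ⊢
    obtain ⟨⟨-, rfl⟩, hvT, hins⟩ := h
    exact ⟨⟨hins, Finset.card_insert_of_notMem hvT⟩, Finset.mem_insert_self _ _⟩
  · rintro ⟨S, v⟩ h
    simp only [Finset.mem_sigma, mem_indSetsOfCard, mem_extensions] at h ⊢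
    obtain ⟨⟨hS, hcard⟩, hvS⟩ := h
    refine ⟨⟨mem_indSets_of_subset (Finset.erase_subset _ _) hS, ?_⟩,
      Finset.notMem_erase _ _, ?_⟩
    · simp [Finset.card_erase_of_mem hvS, hcard]
    · rwa [Finset.insert_erase hvS]
  · rintro ⟨T, v⟩ h
    simp [Finset.erase_insert (mem_extensions.1 (Finset.mem_sigma.1 h).2).1]
  · rintro ⟨S, v⟩ h
    simp [Finset.insert_erase (Finset.mem_sigma.1 h).2]
  · rintro ⟨T, v⟩ h
    simp [Finset.erase_insert (mem_extensions.1 (Finset.mem_sigma.1 h).2).1]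

lemma sum_card_extensions (k : ℕ) :
    ∑ T ∈ indSetsOfCard G k, #(extensions G T) = (k + 1) * numIs G (k + 1) := by
  have h := sum_sum_extensions (G := G) k (fun _ _ => 1)
  simp only [Finset.sum_const, smul_eq_mul, mul_one] at h
  rw [h, Finset.sum_congr rfl fun S hS => (mem_indSetsOfCard.1 hS).2, Finset.sum_const,
    smul_eq_mul, mul_comm, numIs_eq_card_indSetsOfCard]

lemma sum_sq_card_extensions (k : ℕ) :
    ∑ T ∈ indSetsOfCard G k, #(extensions G T) ^ 2
      = ∑ S ∈ indSetsOfCard G (k + 1), ∑ u ∈ S, #(extensions G (S.erase u)) := by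
  simpa [sq] using sum_sum_extensions (G := G) k (fun T _ => #(extensions G T))

lemma mem_extensions_of_mem_extensions_erase {S : Finset V} (hS : S ∈ indSets G)
    {u₁ u₂ v : V} (hne : u₁ ≠ u₂) (h₁ : v ∈ extensions G (S.erase u₁))
    (h₂ : v ∈ extensions G (S.erase u₂)) :
    v ∈ extensions G S := by
  simp only [mem_extensions, mem_indSets, Finset.mem_insert, Finset.mem_erase] at *
  grind

lemma card_filter_mem_extensions_erase_le {S : Finset V} (hS : S ∈ indSets G) (v : V) :
    #(S.filter fun u => v ∈ extensions G (S.erase u))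
      ≤ if v ∈ extensions G S then #S else 1 := by
  split_ifs with hv
  · exact Finset.card_filter_le _ _
  -- a neighbour of `v` in `S` is the only vertex whose removal lets `v` in
  · refine Finset.card_le_one.2 fun u₁ h₁ u₂ h₂ => ?_
    by_contra hne
    exact hv (mem_extensions_of_mem_extensions_erase hS hne (Finset.mem_filter.1 h₁).2
      (Finset.mem_filter.1 h₂).2)

lemma sum_card_extensions_erase_add_le {S : Finset V} (hS : S ∈ indSets G) :
    ∑ u ∈ S, #(extensions G (S.erase u)) + #(extensions G S)
      ≤ Fintype.card V + #S * #(extensions G S) := by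
  set E := extensions G S
  have hswap : ∑ u ∈ S, #(extensions G (S.erase u))
      = ∑ v, #(S.filter fun u => v ∈ extensions G (S.erase u)) := by
    simp only [Finset.card_filter]
    rw [Finset.sum_comm]
    refine Finset.sum_congr rfl fun u _ => ?_
    rw [← Finset.card_filter, Finset.filter_mem_eq_inter, Finset.univ_inter]
  have hE : #E = ∑ v, if v ∈ E then (1 : ℕ) else 0 := by simp
  calc ∑ u ∈ S, #(extensions G (S.erase u)) + #E
      ≤ ∑ v, ((if v ∈ E then #S else 1) + if v ∈ E then 1 else 0) := by
        rw [hswap, hE, ← Finset.sum_add_distrib]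
        gcongr with v
        exact card_filter_mem_extensions_erase_le hS v
    _ = ∑ v, (1 + if v ∈ E then #S else 0) := by
        refine Finset.sum_congr rfl fun v _ => ?_
        split_ifs <;> omega
    _ = Fintype.card V + #S * #E := by
        simp [Finset.sum_add_distrib, mul_comm]

lemma sum_sq_card_extensions_le (k : ℕ) :
    ∑ T ∈ indSetsOfCard G k, #(extensions G T) ^ 2
      ≤ Fintype.card V * numIs G (k + 1) + k * ((k + 2) * numIs G (k + 2)) := by
  calc ∑ T ∈ indSetsOfCard G k, #(extensions G T) ^ 2
      = ∑ S ∈ indSetsOfCard G (k + 1), ∑ u ∈ S, #(extensions G (S.erase u)) :=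
        sum_sq_card_extensions k
    _ ≤ ∑ S ∈ indSetsOfCard G (k + 1), (Fintype.card V + k * #(extensions G S)) := by
        gcongr with S hS
        obtain ⟨hS, hcard⟩ := mem_indSetsOfCard.1 hS
        have := sum_card_extensions_erase_add_le hS
        rw [hcard] at this
        linarith
    _ = Fintype.card V * numIs G (k + 1) + k * ((k + 2) * numIs G (k + 2)) := by
        rw [Finset.sum_add_distrib, ← Finset.mul_sum, sum_card_extensions, Finset.sum_const,
          smul_eq_mul, numIs_eq_card_indSetsOfCard, mul_comm]
        rfl

theorem moon_moser (k : ℕ) :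
    ((k + 1) * numIs G (k + 1)) ^ 2
      ≤ numIs G k * (Fintype.card V * numIs G (k + 1) + k * ((k + 2) * numIs G (k + 2))) := by
  calc ((k + 1) * numIs G (k + 1)) ^ 2
      = (∑ T ∈ indSetsOfCard G k, #(extensions G T)) ^ 2 := by rw [sum_card_extensions]
    _ ≤ numIs G k * ∑ T ∈ indSetsOfCard G k, #(extensions G T) ^ 2 :=
        sq_sum_le_card_mul_sum_sq
    _ ≤ _ := by gcongr; exact sum_sq_card_extensions_le k

theorem mul_mul_numIs_succ_le {α : ℕ} (hα : α = (indSets G).sup Finset.card) (k : ℕ) :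
    α * ((k + 1) * numIs G (k + 1)) ≤ Fintype.card V * ((α - k) * numIs G k) := by
  have htop : ∀ k, α ≤ k →
      α * ((k + 1) * numIs G (k + 1)) ≤ Fintype.card V * ((α - k) * numIs G k) :=
    fun k hk => by simp [numIs_eq_zero_of_sup_lt (hα ▸ Nat.lt_succ_of_le hk)]
  rcases le_total α k with hk | hk
  · exact htop k hk
  induction hk using Nat.decreasingInduction with
  | self => exact htop α le_rfl
  | of_succ k hk ih =>
    rcases Nat.eq_zero_or_pos (numIs G (k + 1)) with h0 | hpos
    · simp [h0]
    obtain ⟨m, rfl⟩ : ∃ m, α = k + 1 + m := ⟨α - (k + 1), by omega⟩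
    rw [show k + 1 + m - (k + 1) = m by omega] at ih
    rw [show k + 1 + m - k = m + 1 by omega]
    refine Nat.le_of_mul_le_mul_left ?_ (Nat.mul_pos k.succ_pos hpos)
    calc (k + 1) * numIs G (k + 1) * ((k + 1 + m) * ((k + 1) * numIs G (k + 1)))
        = (k + 1 + m) * ((k + 1) * numIs G (k + 1)) ^ 2 := by ring
      _ ≤ (k + 1 + m) * (numIs G k *
            (Fintype.card V * numIs G (k + 1) + k * ((k + 2) * numIs G (k + 2)))) := by
          gcongr; exact moon_moser k
      _ = numIs G k * ((k + 1 + m) * Fintype.card V * numIs G (k + 1)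
            + k * ((k + 1 + m) * ((k + 1 + 1) * numIs G (k + 1 + 1)))) := by ring
      _ ≤ numIs G k * ((k + 1 + m) * Fintype.card V * numIs G (k + 1)
            + k * (Fintype.card V * (m * numIs G (k + 1)))) := by gcongr
      _ = (k + 1) * numIs G (k + 1) * (Fintype.card V * ((m + 1) * numIs G k)) := by ring

end IndependentSets

theorem stmt15_general {V : Type*} [Fintype V] (G : SimpleGraph V) (α : ℕ)
    (hα : α = (indSets G).sup Finset.card)
    (k : ℕ) (hk1 : 1 ≤ k) (hkα : k ≤ α) :
    (k : ℝ) * numIs G k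
      ≤ (Fintype.card V : ℝ) * (1 - ((k : ℝ) - 1) / α) * numIs G (k - 1) := by
  obtain ⟨j, rfl⟩ : ∃ j, k = j + 1 := ⟨k - 1, by omega⟩
  have hα0 : (0 : ℝ) < α := by exact_mod_cast (by omega : 0 < α)
  have key := mul_mul_numIs_succ_le hα j
  rw [← Nat.cast_le (α := ℝ)] at key
  push_cast [Nat.cast_sub (by omega : j ≤ α)] at key
  have hrhs : (Fintype.card V : ℝ) * (1 - j / α) * numIs G j
      = Fintype.card V * ((α - j) * numIs G j) / α := by
    field_simp
  simp only [Nat.cast_add, Nat.cast_one, add_sub_cancel_right, Nat.add_sub_cancel]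
  rw [hrhs, le_div_iff₀ hα0]
  linarith

theorem stmt15 {V : Type*} [Fintype V] (G : SimpleGraph V) (α : ℕ)
    (hα : α = (indSets G).sup Finset.card) (hα1 : 1 ≤ α)
    (k : ℕ) (hk1 : 1 ≤ k) (hkα : k ≤ α) :
    (k : ℝ) * numIs G k
      ≤ (Fintype.card V : ℝ) * (1 - ((k : ℝ) - 1) / α) * numIs G (k - 1) :=
  stmt15_general G α hα k hk1 hkα
end

section
/- For any finite graph G, α(G) = ᾱ_G(1) + ∫₁^∞ Var_λ(|I|)/λ dλ, where α(G) is the independence number, ᾱ_G(λ) = λP_G'(λ)/P_G(λ), and Var_λ(|I|) is the variance of the size of an independent set under the hard-core model at fugacity λ; in particular ᾱ_G(λ) → α(G) as λ → ∞. -/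
open Finset MeasureTheory Real
open scoped Classical

/-!
The mean size `ᾱ(λ) = λ P'(λ) / P(λ)` satisfies `λ ᾱ'(λ) = Var_λ`, which is nonnegative by
Cauchy–Schwarz, so `ᾱ` is nondecreasing and the improper integral of `Var_λ / λ` over `(1, ∞)`
equals `lim ᾱ - ᾱ(1)`. The limit is `α`: after dividing numerator and denominator of `ᾱ` by
`λ^α`, only the terms of top degree `α` survive.
-/

open Filter Topology Set

namespace HardCore

variable {ι : Type*} (S : Finset ι) (f : ι → ℕ)

noncomputable def moment (k : ℕ) (x : ℝ) : ℝ := ∑ s ∈ S, (f s : ℝ) ^ k * x ^ f s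

noncomputable def mean (x : ℝ) : ℝ := moment S f 1 x / moment S f 0 x

noncomputable def variance (x : ℝ) : ℝ := moment S f 2 x / moment S f 0 x - mean S f x ^ 2

variable {S f}

lemma moment_zero_pos (hS : S.Nonempty) {x : ℝ} (hx : 0 < x) : 0 < moment S f 0 x :=
  sum_pos (fun _ _ => by positivity) hS

variable (S f)

lemma hasDerivAt_moment (k : ℕ) {x : ℝ} (hx : x ≠ 0) :
    HasDerivAt (moment S f k) (moment S f (k + 1) x / x) x := by
  have h : HasDerivAt (moment S f k) (∑ s ∈ S, (f s : ℝ) ^ k * (f s * x ^ (f s - 1))) x :=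
    HasDerivAt.fun_sum fun s _ => (hasDerivAt_pow (f s) x).const_mul _
  refine h.congr_deriv ?_
  rw [moment, sum_div]
  refine sum_congr rfl fun s _ => ?_
  rcases eq_or_ne (f s) 0 with h0 | h0
  · simp [h0]
  · rw [← mul_pow_sub_one h0 x]
    field_simp
    ring

lemma hasDerivAt_mean (hS : S.Nonempty) {x : ℝ} (hx : 0 < x) :
    HasDerivAt (mean S f) (variance S f x / x) x := by
  have hZ := (moment_zero_pos (f := f) hS hx).ne'
  refine ((hasDerivAt_moment S f 1 hx.ne').div (hasDerivAt_moment S f 0 hx.ne') hZ).congr_deriv ?_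
  simp only [variance, mean]
  field_simp

lemma sq_moment_one_le {x : ℝ} (hx : 0 ≤ x) :
    moment S f 1 x ^ 2 ≤ moment S f 2 x * moment S f 0 x :=
  sum_sq_le_sum_mul_sum_of_sq_le_mul S (fun _ _ => by positivity) (fun _ _ => by positivity)
    fun _ _ => by ring_nf; rfl

lemma variance_nonneg {x : ℝ} (hx : 0 ≤ x) : 0 ≤ variance S f x := by
  have hZ : 0 ≤ moment S f 0 x := sum_nonneg fun _ _ => by positivity
  rw [variance, mean, div_pow, sub_nonneg]
  rcases hZ.eq_or_lt with h | h
  · simp [← h]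
  · rw [div_le_div_iff₀ (by positivity) h]
    nlinarith [sq_moment_one_le S f hx]

lemma tendsto_pow_div_pow_atTop {m n : ℕ} (h : m ≤ n) :
    Tendsto (fun x : ℝ => x ^ m / x ^ n) atTop (𝓝 (if m = n then 1 else 0)) := by
  split_ifs with hmn
  · subst hmn
    exact tendsto_const_nhds.congr'
      ((eventually_ne_atTop 0).mono fun x hx => (div_self (pow_ne_zero _ hx)).symm)
  · refine (tendsto_inv_atTop_zero.comp (tendsto_pow_atTop (by omega : n - m ≠ 0))).congr'
      ((eventually_ne_atTop 0).mono fun x hx => ?_)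
    rw [Function.comp_apply, ← div_mul_cancel_left₀ (pow_ne_zero m hx), ← pow_add,
      Nat.add_sub_cancel' h]

lemma tendsto_moment_div_pow_sup (k : ℕ) :
    Tendsto (fun x => moment S f k x / x ^ S.sup f) atTop
      (𝓝 (((S.sup f : ℕ) : ℝ) ^ k * #{s ∈ S | f s = S.sup f})) := by
  have h := tendsto_finsetSum S fun s hs =>
    (tendsto_pow_div_pow_atTop (le_sup (f := f) hs)).const_mul ((f s : ℝ) ^ k)
  simp only [moment, sum_div, mul_div_assoc]
  convert h using 2
  rw [natCast_card_filter, mul_sum]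
  refine sum_congr rfl fun s _ => ?_
  split_ifs with hs_max <;> simp [hs_max]

lemma tendsto_mean_atTop (hS : S.Nonempty) :
    Tendsto (mean S f) atTop (𝓝 ((S.sup f : ℕ) : ℝ)) := by
  have hN : (#{s ∈ S | f s = S.sup f} : ℝ) ≠ 0 := by
    obtain ⟨s, hs, hmax⟩ := exists_mem_eq_sup S hS f
    exact_mod_cast (card_pos.2 ⟨s, mem_filter.2 ⟨hs, hmax.symm⟩⟩).ne'
  have h := (tendsto_moment_div_pow_sup S f 1).div (tendsto_moment_div_pow_sup S f 0)
    (by simpa using hN)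
  rw [pow_one, pow_zero, one_mul, mul_div_cancel_right₀ _ hN] at h
  refine h.congr' ((eventually_gt_atTop 0).mono fun x hx =>
    div_div_div_cancel_right₀ (pow_ne_zero _ hx.ne') _ _)

theorem integral_variance_div (hS : S.Nonempty) {a : ℝ} (ha : 0 < a) :
    ∫ x in Ioi a, variance S f x / x = S.sup f - mean S f a :=
  integral_Ioi_of_hasDerivAt_of_nonneg' (fun _ hx => hasDerivAt_mean S f hS (ha.trans_le hx))
    (fun _ hx => div_nonneg (variance_nonneg S f (ha.trans hx).le) (ha.trans hx).le)
    (tendsto_mean_atTop S f hS)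

end HardCore

open HardCore

section Graph

variable {V : Type*} [Fintype V] (G : SimpleGraph V)

lemma indSets_nonempty : (indSets G).Nonempty := ⟨∅, by simp [indSets]⟩

lemma indPoly_eq_moment : indPoly G = moment (indSets G) card 0 :=
  funext fun x => by simp [indPoly, moment]

lemma avgSize_eq_mean : avgSize G = mean (indSets G) card := by
  funext x
  rcases eq_or_ne x 0 with rfl | hx
  · simp [avgSize, mean, moment, zero_pow_eq]
  · rw [avgSize, mean, indPoly_eq_moment, (hasDerivAt_moment _ _ 0 hx).deriv,
      mul_div_cancel₀ _ hx]

end Graph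

theorem stmt18 {V : Type*} [Fintype V] (G : SimpleGraph V) :
    ((((indSets G).sup Finset.card : ℕ) : ℝ)
        = avgSize G 1 + ∫ l in Set.Ioi (1 : ℝ),
            ((∑ s ∈ indSets G, (s.card : ℝ) ^ 2 * l ^ s.card) / indPoly G l
              - ((∑ s ∈ indSets G, (s.card : ℝ) * l ^ s.card) / indPoly G l) ^ 2) / l) ∧
      Filter.Tendsto (avgSize G) Filter.atTop
        (nhds (((indSets G).sup Finset.card : ℕ) : ℝ)) := by
  have hS := indSets_nonempty G
  rw [avgSize_eq_mean]
  refine ⟨?_, tendsto_mean_atTop _ _ hS⟩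
  have hintegrand : ∀ l, variance (indSets G) card l / l =
      ((∑ s ∈ indSets G, (s.card : ℝ) ^ 2 * l ^ s.card) / indPoly G l
        - ((∑ s ∈ indSets G, (s.card : ℝ) * l ^ s.card) / indPoly G l) ^ 2) / l := by
    simp [variance, mean, indPoly_eq_moment, moment]
  simp only [← hintegrand, integral_variance_div _ _ hS one_pos]
  ring
end
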